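/- Let k be a field, G a finite group, w a finite-dimensional kG-module, and c a finite-dimensional kG-module. For any family (X_λ)_{λ ∈ Λ} of kG-modules, the canonical map ⊕_{λ ∈ Λ} Hom_w(c, X_λ) → Hom_w(c, ⊕_{λ ∈ Λ} X_λ) is an isomorphism of k-vector spaces. (Finite-dimensional modules are compact in the relatively stable category StMod_w(kG).) -/

import Mathlib

/-!
Composition with the coproduct inclusions `ι_l` gives the map `⊕ Hom_w(c, X_l) → Hom_w(c, ∐ X)`.
The projections `π_l : ∐ X ⟶ X_l` (with `ι_m ≫ π_l = δ_{ml}`) preserve the maps factoring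
through `w`-projectives, so composing with them recovers the components: the map is injective.
Since `c` is finite-dimensional, the image of any `f : c ⟶ ∐ X` meets only finitely many
summands, so `f = ∑_{l ∈ S} f ≫ π_l ≫ ι_l` for a finite `S`: the map is surjective.
-/

open CategoryTheory MonoidalCategory Limits

/-- `X` is `w`-projective: `X` is a direct summand of `w ⊗ Y` (diagonal `G`-action)
for some `kG`-module `Y`. -/
def IsRelProjective {k G : Type} [Field k] [Group G] (w X : Rep k G) : Prop :=
  ∃ (Y : Rep k G) (i : X ⟶ w ⊗ Y) (r : w ⊗ Y ⟶ X), i ≫ r = 𝟙 X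

/-- `f` factors through some `w`-projective module. -/
def FactorsThroughRelProj {k G : Type} [Field k] [Group G] (w : Rep k G)
    {X Y : Rep k G} (f : X ⟶ Y) : Prop :=
  ∃ (Z : Rep k G) (g : X ⟶ Z) (h : Z ⟶ Y), IsRelProjective w Z ∧ g ≫ h = f

/-- The subspace of `Hom_{kG}(X, Y)` of homomorphisms factoring through a
`w`-projective module. -/
noncomputable abbrev relProjHoms {k G : Type} [Field k] [Group G] (w X Y : Rep k G) :
    Submodule k (X ⟶ Y) :=
  Submodule.span k {f | FactorsThroughRelProj w f}

open DirectSum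

theorem DirectSum.exists_finset_sum_lof_comp_component_comp_eq {R ι M : Type*} [Semiring R]
    [DecidableEq ι] {N : ι → Type*} [∀ i, AddCommMonoid (N i)] [∀ i, Module R (N i)]
    [AddCommMonoid M] [Module R M] [Module.Finite R M] (φ : M →ₗ[R] ⨁ i, N i) :
    ∃ S : Finset ι, ∑ i ∈ S, lof R ι N i ∘ₗ component R ι N i ∘ₗ φ = φ := by
  classical
  obtain ⟨n, s, hs⟩ := Module.Finite.exists_fin (R := R) (M := M)
  refine ⟨Finset.univ.sup fun j => (φ (s j)).support, LinearMap.ext_on_range hs fun j => ?_⟩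
  have hsub : (φ (s j)).support ⊆ Finset.univ.sup fun j => (φ (s j)).support :=
    Finset.le_sup (f := fun j => (φ (s j)).support) (Finset.mem_univ j)
  conv_rhs => rw [← DirectSum.sum_support_of (φ (s j))]
  rw [LinearMap.sum_apply, ← Finset.sum_subset hsub fun i _ hi => by
    simp [← apply_eq_component, DFinsupp.notMem_support_iff.mp hi]]
  simp [← apply_eq_component, lof_eq_of]

namespace Rep

universe u v w
variable {k : Type u} {G : Type v} [Ring k] [Monoid G] {Λ : Type w} [DecidableEq Λ]

noncomputable def coprodIsoDirectSum (X : Λ → Rep.{w} k G) :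
    ModuleCat.of k (⨁ l, (X l).V) ≅ (forget₂ (Rep k G) (ModuleCat k)).obj (∐ X) :=
  (ModuleCat.coprodIsoDirectSum fun l => (forget₂ (Rep k G) (ModuleCat k)).obj (X l)).symm ≪≫
    (PreservesCoproduct.iso (forget₂ (Rep k G) (ModuleCat k)) X).symm

lemma lof_coprodIsoDirectSum_hom (X : Λ → Rep.{w} k G) (l : Λ) :
    ModuleCat.ofHom (lof k Λ (fun l => (X l).V) l) ≫ (coprodIsoDirectSum X).hom =
      (forget₂ (Rep k G) (ModuleCat k)).map (Sigma.ι X l) := by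
  rw [coprodIsoDirectSum, Iso.trans_hom, Iso.symm_hom, Iso.symm_hom, PreservesCoproduct.inv_hom,
    ← ι_comp_sigmaComparison, ← Category.assoc]
  exact congrArg (· ≫ _) (ModuleCat.lof_coprodIsoDirectSum_inv _ l)

lemma coprodIsoDirectSum_hom_π (X : Λ → Rep.{w} k G) (l : Λ) :
    (coprodIsoDirectSum X).hom ≫ (forget₂ (Rep k G) (ModuleCat k)).map (Sigma.π X l) =
      ModuleCat.ofHom (component k Λ (fun l => (X l).V) l) := by
  ext1
  refine DirectSum.linearMap_ext k fun j => ?_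
  rw [← ModuleCat.hom_ofHom (lof k Λ (fun l => (X l).V) j), ← ModuleCat.hom_comp,
    ← ModuleCat.hom_comp, ← Category.assoc, lof_coprodIsoDirectSum_hom, ← Functor.map_comp]
  by_cases h : j = l
  · subst h
    simp
  · simp [h, Sigma.ι_π_of_ne, component_comp_lof]

theorem exists_finset_sum_π_ι_eq (X : Λ → Rep.{w} k G) {c : Rep.{w} k G} [Module.Finite k c.V]
    (f : c ⟶ ∐ X) : ∃ S : Finset Λ, ∑ l ∈ S, f ≫ Sigma.π X l ≫ Sigma.ι X l = f := by
  set F := forget₂ (Rep k G) (ModuleCat k)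
  set e := coprodIsoDirectSum X
  have hι (l : Λ) :
      F.map (Sigma.ι X l) ≫ e.inv = ModuleCat.ofHom (lof k Λ (fun l => (X l).V) l) :=
    (Iso.comp_inv_eq e).mpr (lof_coprodIsoDirectSum_hom X l).symm
  have hπ (l : Λ) :
      F.map (Sigma.π X l) = e.inv ≫ ModuleCat.ofHom (component k Λ (fun l => (X l).V) l) :=
    (Iso.eq_inv_comp e).mpr (coprodIsoDirectSum_hom_π X l)
  obtain ⟨S, hS⟩ := exists_finset_sum_lof_comp_component_comp_eq (F.map f ≫ e.inv).hom
  refine ⟨S, F.map_injective ?_⟩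
  rw [← cancel_mono e.inv, Functor.map_sum, Preadditive.sum_comp]
  ext1
  rw [← hS, ModuleCat.hom_sum]
  refine Finset.sum_congr rfl fun l _ => ?_
  simp only [Functor.map_comp, Category.assoc, hι, hπ]
  rfl

end Rep

section RelStable

variable {k G : Type} [Field k] [Group G] (w c : Rep k G)

lemma relProjHoms_le_comap_rightComp {A B : Rep k G} (u : A ⟶ B) :
    relProjHoms w c A ≤ (relProjHoms w c B).comap (Linear.rightComp k c u) := by
  rw [Submodule.span_le]
  rintro f ⟨Z, g, h, hZ, rfl⟩
  exact Submodule.subset_span ⟨Z, g, h ≫ u, hZ, (Category.assoc g h u).symm⟩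

/-- `Hom_w(c, A)`, the morphisms of the relatively stable category. -/
abbrev RelStableHom (A : Rep k G) : Type :=
  (c ⟶ A) ⧸ relProjHoms w c A

namespace RelStableHom

variable {w c}

noncomputable def postcomp {A B : Rep k G} (u : A ⟶ B) :
    RelStableHom w c A →ₗ[k] RelStableHom w c B :=
  Submodule.mapQ _ _ (Linear.rightComp k c u) (relProjHoms_le_comap_rightComp w c u)

@[simp]
lemma postcomp_mk {A B : Rep k G} (u : A ⟶ B) (f : c ⟶ A) :
    postcomp (w := w) u (Submodule.Quotient.mk f) = Submodule.Quotient.mk (f ≫ u) :=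
  rfl

variable {Λ : Type} [DecidableEq Λ] (X : Λ → Rep k G)

variable (w c) in
noncomputable def sigmaDesc : (⨁ l, RelStableHom w c (X l)) →ₗ[k] RelStableHom w c (∐ X) :=
  toModule k Λ _ fun l => postcomp (Sigma.ι X l)

lemma sigmaDesc_of (l : Λ) (f : c ⟶ X l) :
    sigmaDesc w c X (of _ l (Submodule.Quotient.mk f)) = Submodule.Quotient.mk (f ≫ Sigma.ι X l) :=
  toModule_lof k l _

lemma postcomp_π_sigmaDesc (x : ⨁ l, RelStableHom w c (X l)) (l : Λ) :
    postcomp (Sigma.π X l) (sigmaDesc w c X x) = x l := by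
  induction x using DirectSum.induction_on with
  | zero => simp
  | of j a =>
    obtain ⟨f, rfl⟩ := Submodule.Quotient.mk_surjective _ a
    rw [sigmaDesc_of, postcomp_mk, Category.assoc]
    by_cases h : j = l
    · subst h
      simp
    · simp [Sigma.ι_π_of_ne X h, of_eq_of_ne _ _ _ (Ne.symm h)]
  | add x y hx hy => simp [hx, hy]

lemma sigmaDesc_injective : Function.Injective (sigmaDesc w c X) := fun x y hxy =>
  DirectSum.ext fun l => by rw [← postcomp_π_sigmaDesc, hxy, postcomp_π_sigmaDesc]

lemma sigmaDesc_surjective [Module.Finite k c.V] : Function.Surjective (sigmaDesc w c X) := by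
  intro z
  obtain ⟨f, rfl⟩ := Submodule.Quotient.mk_surjective _ z
  obtain ⟨S, hS⟩ := Rep.exists_finset_sum_π_ι_eq X f
  refine ⟨∑ l ∈ S, of _ l (Submodule.Quotient.mk (f ≫ Sigma.π X l)), ?_⟩
  conv_rhs => rw [← hS]
  simp only [map_sum, sigmaDesc_of, Category.assoc]
  exact (map_sum (relProjHoms w c (∐ X)).mkQ _ S).symm

end RelStableHom

end RelStable

theorem finiteDimensional_compact_relStable (k G : Type) [Field k] [Group G]
    (w : Rep k G)
    (c : Rep k G) [FiniteDimensional k c.V]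
    {Λ : Type} [DecidableEq Λ] (X : Λ → Rep k G) :
    ∃ e : (DirectSum Λ fun l => ((c ⟶ X l) ⧸ relProjHoms w c (X l))) ≃ₗ[k]
        ((c ⟶ ∐ X) ⧸ relProjHoms w c (∐ X)),
      ∀ (l : Λ) (f : c ⟶ X l),
        e (DirectSum.of (fun l => ((c ⟶ X l) ⧸ relProjHoms w c (X l))) l
            (Submodule.Quotient.mk f)) =
          Submodule.Quotient.mk (f ≫ Sigma.ι X l) :=
  ⟨.ofBijective (RelStableHom.sigmaDesc w c X)
    ⟨RelStableHom.sigmaDesc_injective X, RelStableHom.sigmaDesc_surjective X⟩,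
    RelStableHom.sigmaDesc_of X⟩
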